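/- arXiv:1806.07966 — 4 statements merged into one kernel-verified Lean document; each statement's English description precedes it below -/
import Mathlib

section
/- Let g : (ℕ → Bool) → ℝ be g(u) = ∑'_{n} (if u(n) then 2 else 0) · (1/3)^{n+1}, and let μ = Measure.map g β be the Cantor distribution. Then μ satisfies the self-similarity equation μ = (1/2) · Measure.map (x ↦ x/3) μ + (1/2) · Measure.map (x ↦ (x+2)/3) μ; in particular μ([0,1/3]) = 1/2 and μ([2/3,1]) = 1/2. -/
open MeasureTheory

/-- `β` is the fair-coin measure on bit-streams: the countable product of copies of the
probability measure on `Bool` giving mass `1/2` to `true` and `1/2` to `false`.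
Since the infinite product of probability measures is uniquely determined by its values
on cylinder sets, we characterize `β` by: every cylinder fixing the coordinates in a
finite set `s` has measure `(1/2) ^ s.card`. -/
def IsFairCoinMeasure (β : Measure (ℕ → Bool)) : Prop :=
  ∀ (s : Finset ℕ) (f : ℕ → Bool),
    β {u : ℕ → Bool | ∀ i ∈ s, u i = f i} = (1 / 2 : ENNReal) ^ s.card

namespace CantorAux

def IsFairCoinMeasure' (β : Measure (ℕ → Bool)) : Prop :=
  ∀ (s : Finset ℕ) (f : ℕ → Bool),
    β {u : ℕ → Bool | ∀ i ∈ s, u i = f i} = (1 / 2 : ENNReal) ^ s.card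


def cyl (s : Finset ℕ) (f : ℕ → Bool) : Set (ℕ → Bool) := {u | ∀ i ∈ s, u i = f i}

def Cyl : Set (Set (ℕ → Bool)) := {t | ∃ s f, t = cyl s f}

lemma measurableSet_cyl (s : Finset ℕ) (f : ℕ → Bool) : MeasurableSet (cyl s f) := by
  have h : cyl s f = ⋂ i ∈ s, (fun u : ℕ → Bool => u i) ⁻¹' {f i} := by
    ext u; simp [cyl]
  rw [h]
  exact MeasurableSet.biInter s.countable_toSet fun i _ =>
    (measurable_pi_apply i) (measurableSet_singleton (f i))

lemma pi_eq : (inferInstance : MeasurableSpace (ℕ → Bool)) = MeasurableSpace.generateFrom Cyl := by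
  refine le_antisymm ?_ (MeasurableSpace.generateFrom_le ?_)
  · show MeasurableSpace.pi ≤ _
    rw [MeasurableSpace.pi]
    refine iSup_le fun i => ?_
    rintro t ⟨A, -, rfl⟩
    have h : (fun u : ℕ → Bool => u i) ⁻¹' A = ⋃ b ∈ A, cyl {i} (fun _ => b) := by
      ext u; simp [cyl]
    rw [h]
    exact @MeasurableSet.biUnion _ _ (MeasurableSpace.generateFrom Cyl) _ _ A.to_countable
      (fun b _ => MeasurableSpace.measurableSet_generateFrom ⟨{i}, fun _ => b, rfl⟩)
  · rintro _ ⟨s, f, rfl⟩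
    exact measurableSet_cyl s f

lemma isPiSystem_Cyl : IsPiSystem Cyl := by
  rintro _ ⟨s, f, rfl⟩ _ ⟨t, h, rfl⟩ hne
  obtain ⟨u, hu⟩ := hne
  refine ⟨s ∪ t, fun i => if i ∈ s then f i else h i, ?_⟩
  ext v
  simp only [cyl, Set.mem_inter_iff, Set.mem_setOf_eq, Finset.mem_union]
  constructor
  · rintro ⟨h1, h2⟩ i hi
    by_cases his : i ∈ s
    · simp [his, h1 i his]
    · simp only [his, if_false]
      exact h2 i (hi.resolve_left his)
  · intro H
    refine ⟨fun i hi => ?_, fun i hi => ?_⟩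
    · have := H i (Or.inl hi); simpa [hi] using this
    · by_cases his : i ∈ s
      · have h1 : u i = f i := hu.1 i his
        have h2 : u i = h i := hu.2 i hi
        have := H i (Or.inl his)
        simp only [his, if_true] at this
        rw [this, ← h1, h2]
      · have := H i (Or.inr hi); simpa [his] using this



def cons (b : Bool) (v : ℕ → Bool) : ℕ → Bool := fun n =>
  match n with
  | 0 => b
  | k + 1 => v k

@[simp] lemma cons_zero (b : Bool) (v : ℕ → Bool) : cons b v 0 = b := rfl
@[simp] lemma cons_succ (b : Bool) (v : ℕ → Bool) (k : ℕ) : cons b v (k + 1) = v k := rfl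

lemma measurable_cons (b : Bool) : Measurable (cons b) := by
  rw [measurable_pi_iff]
  intro n
  match n with
  | 0 => exact measurable_const
  | k + 1 => exact measurable_pi_apply k

lemma map_cons_cyl (β : Measure (ℕ → Bool)) (hβ : IsFairCoinMeasure' β)
    (b : Bool) (s : Finset ℕ) (f : ℕ → Bool) :
    Measure.map (cons b) β (cyl s f) =
      if 0 ∈ s ∧ f 0 ≠ b then 0 else (1 / 2 : ENNReal) ^ (s.erase 0).card := by
  rw [Measure.map_apply (measurable_cons b) (measurableSet_cyl s f)]
  by_cases h0 : 0 ∈ s ∧ f 0 ≠ b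
  · have hem : cons b ⁻¹' cyl s f = ∅ := by
      ext v
      simp only [Set.mem_preimage, cyl, Set.mem_setOf_eq, Set.mem_empty_iff_false, iff_false,
        not_forall]
      exact ⟨0, h0.1, by simp [Ne.symm h0.2]⟩
    simp [hem, h0]
  · have hpre : cons b ⁻¹' cyl s f = cyl ((s.erase 0).image (· - 1)) (fun j => f (j + 1)) := by
      ext v
      simp only [Set.mem_preimage, cyl, Set.mem_setOf_eq, Finset.mem_image, Finset.mem_erase]
      constructor
      · rintro H j ⟨i, ⟨hi0, his⟩, rfl⟩
        obtain ⟨k, rfl⟩ := Nat.exists_eq_succ_of_ne_zero hi0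
        simpa using H (k + 1) his
      · intro H i his
        match i with
        | 0 =>
          have : f 0 = b := by
            by_contra hc; exact h0 ⟨his, hc⟩
          simp [this]
        | k + 1 =>
          have := H k ⟨k + 1, ⟨Nat.succ_ne_zero k, his⟩, rfl⟩
          simpa using this
    rw [hpre]
    have := hβ ((s.erase 0).image (· - 1)) (fun j => f (j + 1))
    rw [show cyl ((s.erase 0).image (· - 1)) (fun j => f (j + 1)) =
        {u : ℕ → Bool | ∀ i ∈ (s.erase 0).image (· - 1), u i = f (i + 1)} from rfl, this]
    rw [if_neg h0]
    congr 1
    rw [Finset.card_image_of_injOn]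
    intro i hi j hj hij
    simp only [Finset.coe_erase, Set.mem_diff, Finset.mem_coe, Set.mem_singleton_iff] at hi hj
    have hij' : i - 1 = j - 1 := hij
    have hi0 : i ≠ 0 := hi.2
    have hj0 : j ≠ 0 := hj.2
    omega


lemma beta_univ (β : Measure (ℕ → Bool)) (hβ : IsFairCoinMeasure' β) : β Set.univ = 1 := by
  have := hβ ∅ (fun _ => false)
  simpa using this

lemma beta_decomp (β : Measure (ℕ → Bool)) (hβ : IsFairCoinMeasure' β) :
    β = (1 / 2 : ENNReal) • Measure.map (cons false) β +
        (1 / 2 : ENNReal) • Measure.map (cons true) β := by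
  have hfin : IsFiniteMeasure β := ⟨by rw [beta_univ β hβ]; exact ENNReal.one_lt_top⟩
  refine ext_of_generate_finite Cyl pi_eq isPiSystem_Cyl ?_ ?_
  · rintro _ ⟨s, f, rfl⟩
    have hL : β (cyl s f) = (1 / 2 : ENNReal) ^ s.card := hβ s f
    simp only [Measure.coe_add, Measure.coe_smul, Pi.add_apply, Pi.smul_apply, smul_eq_mul,
      map_cons_cyl β hβ false s f, map_cons_cyl β hβ true s f, hL]
    by_cases h0 : 0 ∈ s
    · have hc : (s.erase 0).card + 1 = s.card := Finset.card_erase_add_one h0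
      cases hf : f 0
      · simp only [h0, ne_eq, not_true_eq_false, and_false, if_false, true_and,
          Bool.false_eq_true, not_false_eq_true, and_true, if_true, mul_zero, add_zero]
        rw [← hc, pow_succ, mul_comm]
      · simp only [h0, ne_eq, not_true_eq_false, and_false, if_false, true_and,
          Bool.true_eq_false, not_false_eq_true, and_true, if_true, mul_zero, zero_add]
        rw [← hc, pow_succ, mul_comm]
    · have he : s.erase 0 = s := Finset.erase_eq_of_notMem h0
      simp only [h0, false_and, if_false, he]
      rw [← add_mul, ENNReal.add_halves, one_mul]
  · have hm : ∀ b : Bool, Measure.map (cons b) β Set.univ = 1 := fun b => by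
      rw [Measure.map_apply (measurable_cons b) MeasurableSet.univ, Set.preimage_univ,
        beta_univ β hβ]
    simp only [Measure.coe_add, Measure.coe_smul, Pi.add_apply, Pi.smul_apply, smul_eq_mul,
      hm, beta_univ β hβ, mul_one]
    exact (ENNReal.add_halves 1).symm



variable (g : (ℕ → Bool) → ℝ)
  (hg : ∀ u : ℕ → Bool, g u = ∑' n : ℕ, (if u n then (2 : ℝ) else 0) * (1 / 3) ^ (n + 1))

lemma term_le (u : ℕ → Bool) (n : ℕ) :
    (if u n then (2 : ℝ) else 0) * (1 / 3) ^ (n + 1) ≤ (2 / 3) * (1 / 3) ^ n := by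
  have hle : (if u n then (2 : ℝ) else 0) ≤ 2 := by split <;> norm_num
  calc (if u n then (2 : ℝ) else 0) * (1 / 3) ^ (n + 1)
      ≤ 2 * (1 / 3) ^ (n + 1) := by
        exact mul_le_mul_of_nonneg_right hle (by positivity)
    _ = (2 / 3) * (1 / 3) ^ n := by ring

lemma summable_bound : Summable (fun n : ℕ => (2 / 3 : ℝ) * (1 / 3) ^ n) :=
  (summable_geometric_of_lt_one (by norm_num) (by norm_num)).mul_left _

lemma tsum_bound : ∑' n : ℕ, (2 / 3 : ℝ) * (1 / 3) ^ n = 1 := by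
  rw [tsum_mul_left, tsum_geometric_of_lt_one (by norm_num) (by norm_num)]
  norm_num

lemma summable_aux (u : ℕ → Bool) :
    Summable (fun n : ℕ => (if u n then (2 : ℝ) else 0) * (1 / 3) ^ (n + 1)) :=
  Summable.of_nonneg_of_le (fun n => by positivity) (term_le u) summable_bound

include hg

lemma g_nonneg (u : ℕ → Bool) : 0 ≤ g u := by
  rw [hg]; exact tsum_nonneg fun n => by positivity

lemma g_le_one (u : ℕ → Bool) : g u ≤ 1 := by
  rw [hg]
  calc ∑' n : ℕ, (if u n then (2 : ℝ) else 0) * (1 / 3) ^ (n + 1)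
      ≤ ∑' n : ℕ, (2 / 3 : ℝ) * (1 / 3) ^ n :=
        Summable.tsum_le_tsum (term_le u) (summable_aux u) summable_bound
    _ = 1 := tsum_bound

lemma g_cons (b : Bool) (v : ℕ → Bool) :
    g (cons b v) = ((if b then (2 : ℝ) else 0) + g v) / 3 := by
  rw [hg, hg]
  rw [Summable.tsum_eq_zero_add (summable_aux (cons b v))]
  have h1 : ∑' n : ℕ, (if cons b v (n + 1) then (2 : ℝ) else 0) * (1 / 3) ^ (n + 1 + 1)
      = (1 / 3) * ∑' n : ℕ, (if v n then (2 : ℝ) else 0) * (1 / 3) ^ (n + 1) := by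
    rw [← tsum_mul_left]
    congr 1
    ext n
    show (if v n then (2 : ℝ) else 0) * (1 / 3) ^ (n + 1 + 1) = _
    ring
  rw [h1]
  show (if b then (2 : ℝ) else 0) * (1 / 3) ^ (0 + 1) + _ = _
  ring

lemma measurable_g : Measurable g := by
  have htend : ∀ u : ℕ → Bool, Filter.Tendsto
      (fun N => ∑ n ∈ Finset.range N, (if u n then (2 : ℝ) else 0) * (1 / 3) ^ (n + 1))
      Filter.atTop (nhds (g u)) := fun u => by
    rw [hg]; exact (summable_aux u).hasSum.tendsto_sum_nat
  refine measurable_of_tendsto_metrizable (f := fun N u =>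
      ∑ n ∈ Finset.range N, (if u n then (2 : ℝ) else 0) * (1 / 3) ^ (n + 1)) ?_ ?_
  · intro N
    refine Finset.measurable_sum _ fun n _ => ?_
    exact ((measurable_from_top (f := fun b : Bool => if b then (2 : ℝ) else 0)).comp
      (measurable_pi_apply n)).mul_const _
  · exact tendsto_pi_nhds.mpr htend

def tail (u : ℕ → Bool) : ℕ → Bool := fun n => u (n + 1)

omit hg in
lemma cons_tail (u : ℕ → Bool) : cons (u 0) (tail u) = u := by
  funext n; match n with
  | 0 => rfl
  | k + 1 => rfl

lemma g_split (u : ℕ → Bool) :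
    g u = ((if u 0 then (2 : ℝ) else 0) + g (tail u)) / 3 := by
  conv_lhs => rw [← cons_tail u]
  exact g_cons g hg (u 0) (tail u)

lemma preimage_low : g ⁻¹' Set.Icc (0 : ℝ) (1 / 3) = {u | u 0 = false} := by
  ext u
  simp only [Set.mem_preimage, Set.mem_Icc, Set.mem_setOf_eq]
  have h0 := g_nonneg g hg (tail u)
  have h1 := g_le_one g hg (tail u)
  have hs := g_split g hg u
  constructor
  · rintro ⟨-, hle⟩
    cases hu : u 0
    · rfl
    · simp only [hu, if_true] at hs
      exfalso; rw [hs] at hle; linarith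
  · intro hu
    simp only [hu, Bool.false_eq_true, if_false] at hs
    constructor
    · exact g_nonneg g hg u
    · rw [hs]; linarith

lemma preimage_high : g ⁻¹' Set.Icc (2 / 3 : ℝ) 1 = {u | u 0 = true} := by
  ext u
  simp only [Set.mem_preimage, Set.mem_Icc, Set.mem_setOf_eq]
  have h0 := g_nonneg g hg (tail u)
  have h1 := g_le_one g hg (tail u)
  have hs := g_split g hg u
  constructor
  · rintro ⟨hle, -⟩
    cases hu : u 0
    · simp only [hu, Bool.false_eq_true, if_false] at hs
      exfalso; rw [hs] at hle; linarith
    · rfl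
  · intro hu
    simp only [hu, if_true] at hs
    exact ⟨by rw [hs]; linarith, g_le_one g hg u⟩


end CantorAux

/-- The Cantor distribution `μ`, the pushforward of the fair-coin measure `β` along
`g u = ∑' n, (if u n then 2 else 0) * (1/3)^(n+1)`, satisfies the self-similarity
equation `μ = (1/2) • map (x ↦ x/3) μ + (1/2) • map (x ↦ (x+2)/3) μ`; in particular
`μ [0, 1/3] = 1/2` and `μ [2/3, 1] = 1/2`. -/
theorem cantor_distribution_self_similar
    (β : Measure (ℕ → Bool)) (hβ : IsFairCoinMeasure β)
    (g : (ℕ → Bool) → ℝ)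
    (hg : ∀ u : ℕ → Bool,
      g u = ∑' n : ℕ, (if u n then (2 : ℝ) else 0) * (1 / 3) ^ (n + 1))
    (μ : Measure ℝ) (hμ : μ = Measure.map g β) :
    μ = (1 / 2 : ENNReal) • Measure.map (fun x : ℝ => x / 3) μ +
        (1 / 2 : ENNReal) • Measure.map (fun x : ℝ => (x + 2) / 3) μ ∧
      μ (Set.Icc (0 : ℝ) (1 / 3)) = 1 / 2 ∧ μ (Set.Icc (2 / 3 : ℝ) 1) = 1 / 2 := by
  have hβ' : CantorAux.IsFairCoinMeasure' β := hβ
  have hgm : Measurable g := CantorAux.measurable_g g hg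
  have hdec := CantorAux.beta_decomp β hβ'
  refine ⟨?_, ?_, ?_⟩
  · have hmapF : Measure.map g (Measure.map (CantorAux.cons false) β) =
        Measure.map (fun x : ℝ => x / 3) μ := by
      rw [Measure.map_map hgm (CantorAux.measurable_cons false), hμ,
        Measure.map_map (by fun_prop) hgm]
      congr 1
      funext v
      show g (CantorAux.cons false v) = g v / 3
      rw [CantorAux.g_cons g hg]
      norm_num
    have hmapT : Measure.map g (Measure.map (CantorAux.cons true) β) =
        Measure.map (fun x : ℝ => (x + 2) / 3) μ := by
      rw [Measure.map_map hgm (CantorAux.measurable_cons true), hμ,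
        Measure.map_map (by fun_prop) hgm]
      congr 1
      funext v
      show g (CantorAux.cons true v) = (g v + 2) / 3
      rw [CantorAux.g_cons g hg]
      norm_num
      ring
    calc μ = Measure.map g β := hμ
      _ = Measure.map g ((1 / 2 : ENNReal) • Measure.map (CantorAux.cons false) β +
            (1 / 2 : ENNReal) • Measure.map (CantorAux.cons true) β) := by rw [← hdec]
      _ = (1 / 2 : ENNReal) • Measure.map g (Measure.map (CantorAux.cons false) β) +
            (1 / 2 : ENNReal) • Measure.map g (Measure.map (CantorAux.cons true) β) := by
          rw [Measure.map_add _ _ hgm, Measure.map_smul, Measure.map_smul]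
      _ = (1 / 2 : ENNReal) • Measure.map (fun x : ℝ => x / 3) μ +
            (1 / 2 : ENNReal) • Measure.map (fun x : ℝ => (x + 2) / 3) μ := by
          rw [hmapF, hmapT]
  · rw [hμ, Measure.map_apply hgm measurableSet_Icc, CantorAux.preimage_low g hg]
    have := hβ {0} (fun _ => false)
    simpa using this
  · rw [hμ, Measure.map_apply hgm measurableSet_Icc, CantorAux.preimage_high g hg]
    have := hβ {0} (fun _ => true)
    simpa using this
end

section
/- Let X and Y be measurable spaces, s : (ℕ → Bool) → X measurable, and f : X → (ℕ → Bool) → Y with the uncurried map (x,u) ↦ f x u measurable. Then the pushforward of β under the sequenced sampler u ↦ f (s (n ↦ u(2n))) (n ↦ u(2n+1)) equals the monadic bind of the pushforwards: Measure.map (fun u => f (s (fun n => u (2*n))) (fun n => u (2*n+1))) β = (Measure.map s β).bind (fun x => Measure.map (f x) β). -/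
/-!
Splitting a fair bit stream into its even and odd coordinates yields two independent fair bit
streams, i.e. the even/odd split pushes `β` forward to `β ⊗ β`. Hence the sequenced sampler is the
pushforward of `β ⊗ β` under `(v, w) ↦ f (s v) w`, which is the bind by Tonelli. The split is
identified through the uniqueness of a measure with the fair-coin cylinder values: such a measure
is determined by its finite-dimensional marginals, which are measures on finite sets.
-/

open MeasureTheory

open Measure Set

lemma measurable_map_of_measurable_uncurry {α β γ : Type*} [MeasurableSpace α]
    [MeasurableSpace β] [MeasurableSpace γ] {ν : Measure β} [SFinite ν] {f : α → β → γ}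
    (hf : Measurable (Function.uncurry f)) : Measurable fun a ↦ ν.map (f a) := by
  refine measurable_measure.2 fun t ht ↦ ?_
  simp_rw [map_apply hf.of_uncurry_left ht]
  exact measurable_measure_prodMk_left (hf ht)

lemma map_prod_eq_bind {α β γ δ : Type*} [MeasurableSpace α]
    [MeasurableSpace β] [MeasurableSpace γ] [MeasurableSpace δ] (μ : Measure α) (ν : Measure β)
    [SFinite ν] {s : α → γ} (hs : Measurable s) {f : γ → β → δ}
    (hf : Measurable (Function.uncurry f)) :
    (μ.prod ν).map (fun p ↦ f (s p.1) p.2) = (μ.map s).bind fun x ↦ ν.map (f x) := by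
  have hF : Measurable fun p : α × β ↦ f (s p.1) p.2 :=
    hf.comp ((hs.comp measurable_fst).prodMk measurable_snd)
  have hκ := measurable_map_of_measurable_uncurry (ν := ν) hf
  ext t ht
  rw [bind_apply ht hκ.aemeasurable, lintegral_map (measurable_measure.1 hκ t ht) hs,
    map_apply hF ht, prod_apply (hF ht)]
  simp_rw [map_apply hf.of_uncurry_left ht]
  rfl

section FairCoin

variable {ι κ : Type*}

def IsFairCoin (μ : Measure (ι → Bool)) : Prop :=
  ∀ (s : Finset ι) (f : ι → Bool),
    μ {u : ι → Bool | ∀ i ∈ s, u i = f i} = (1 / 2 : ENNReal) ^ s.card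

lemma measurableSet_setOf_forall_mem_eq (s : Finset ι) (f : ι → Bool) :
    MeasurableSet {u : ι → Bool | ∀ i ∈ s, u i = f i} := by
  simp only [ofPred_forall]
  exact .biInter s.countable_toSet fun i _ ↦ measurableSet_eq_fun (measurable_pi_apply i)
    measurable_const

lemma IsFairCoin.isProbabilityMeasure {μ : Measure (ι → Bool)} (hμ : IsFairCoin μ) :
    IsProbabilityMeasure μ :=
  ⟨by simpa using hμ ∅ fun _ ↦ false⟩

lemma IsFairCoin.unique {μ ν : Measure (ι → Bool)} (hμ : IsFairCoin μ) (hν : IsFairCoin ν) :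
    μ = ν := by
  classical
  have := hμ.isProbabilityMeasure
  refine IsProjectiveLimit.unique (P := fun I : Finset ι ↦ μ.map I.restrict) (fun _ ↦ rfl)
    fun I ↦ (ext_of_singleton fun g ↦ ?_).symm
  obtain ⟨f, rfl⟩ : ∃ f : ι → Bool, I.restrict f = g :=
    ⟨fun i ↦ if h : i ∈ I then g ⟨i, h⟩ else false, by ext; simp⟩
  have hpre : I.restrict ⁻¹' ({I.restrict f} : Set (I → Bool)) =
      {u : ι → Bool | ∀ i ∈ I, u i = f i} := by
    ext u; simp [funext_iff]
  rw [map_apply (by fun_prop) (measurableSet_singleton _),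
    map_apply (by fun_prop) (measurableSet_singleton _), hpre, hμ, hν]

lemma IsFairCoin.map_comp {μ : Measure (κ → Bool)} (hμ : IsFairCoin μ) {e : ι → κ}
    (he : e.Injective) : IsFairCoin (μ.map fun u ↦ u ∘ e) := by
  intro s f
  have hpre : (fun u : κ → Bool ↦ u ∘ e) ⁻¹' {w | ∀ i ∈ s, w i = f i} =
      {u | ∀ k ∈ s.map ⟨e, he⟩, u k = Function.extend e f (fun _ ↦ false) k} := by
    ext u; simp [he.extend_apply]
  rw [map_apply (by fun_prop) (measurableSet_setOf_forall_mem_eq s f), hpre, hμ, s.card_map]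

lemma measurable_sumElim {α : Type*} [MeasurableSpace α] :
    Measurable fun p : (ι → α) × (κ → α) ↦ Sum.elim p.1 p.2 :=
  measurable_pi_iff.2 fun i ↦ by cases i <;> simp only [Sum.elim_inl, Sum.elim_inr] <;> fun_prop

lemma IsFairCoin.map_sumElim {μ : Measure (ι → Bool)} {ν : Measure (κ → Bool)}
    (hμ : IsFairCoin μ) (hν : IsFairCoin ν) :
    IsFairCoin ((μ.prod ν).map fun p ↦ Sum.elim p.1 p.2) := by
  have := hν.isProbabilityMeasure
  intro s f
  have hpre : (fun p : (ι → Bool) × (κ → Bool) ↦ Sum.elim p.1 p.2) ⁻¹'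
      {w | ∀ i ∈ s, w i = f i} =
      {a | ∀ i ∈ s.toLeft, a i = f (.inl i)} ×ˢ {b | ∀ j ∈ s.toRight, b j = f (.inr j)} := by
    ext p; simp [Sum.forall]
  rw [map_apply measurable_sumElim (measurableSet_setOf_forall_mem_eq s f), hpre, prod_prod,
    hμ, hν, ← pow_add, s.card_toLeft_add_card_toRight]

end FairCoin

lemma IsFairCoin.map_evens_odds {β : Measure (ℕ → Bool)} (hβ : IsFairCoin β) :
    β.map (fun u ↦ ((fun n ↦ u (2 * n)), fun n ↦ u (2 * n + 1))) = β.prod β := by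
  let e := (MeasurableEquiv.sumPiEquivProdPi fun _ : ℕ ⊕ ℕ ↦ Bool).symm
  refine e.map_measurableEquiv_injective ?_
  have hcomp : e ∘ (fun u : ℕ → Bool ↦ ((fun n ↦ u (2 * n)), fun n ↦ u (2 * n + 1))) =
      fun u ↦ u ∘ Equiv.natSumNatEquivNat := by
    ext u (n | n) <;> rfl
  rw [map_map e.measurable (by fun_prop), hcomp]
  exact (hβ.map_comp Equiv.natSumNatEquivNat.injective).unique (hβ.map_sumElim hβ)

/-- Sequencing samplers corresponds to the monadic bind of the denoted distributions:
the pushforward of the fair-coin measure under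
`u ↦ f (s (n ↦ u (2n))) (n ↦ u (2n+1))` equals
`(Measure.map s β).bind (fun x => Measure.map (f x) β)`. -/
theorem sequenced_sampler_pushforward_eq_bind
    {X Y : Type*} [MeasurableSpace X] [MeasurableSpace Y]
    (β : Measure (ℕ → Bool)) (hβ : IsFairCoinMeasure β)
    (s : (ℕ → Bool) → X) (hs : Measurable s)
    (f : X → (ℕ → Bool) → Y)
    (hf : Measurable fun q : X × (ℕ → Bool) => f q.1 q.2) :
    Measure.map (fun u : ℕ → Bool => f (s (fun n => u (2 * n))) (fun n => u (2 * n + 1))) β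
      = (Measure.map s β).bind (fun x => Measure.map (f x) β) := by
  have hβ' : IsFairCoin β := hβ
  have := hβ'.isProbabilityMeasure
  rw [← map_prod_eq_bind β β hs hf, ← hβ'.map_evens_odds, map_map (by fun_prop) (by fun_prop)]
  rfl
end

section
/- Define measures μ_n on ℕ recursively by μ_0 = 0 and μ_{n+1} = (1/2) · δ_1 + (1/2) · Measure.map (k ↦ k+1) μ_n. Then for every set U ⊆ ℕ, the supremum ⨆_n μ_n(U) equals ∑_{k ∈ U, k ≥ 1} (1/2)^k; that is, the least upper bound of the unfoldings is the geometric distribution with parameter 1/2 supported on {1,2,3,…}. -/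
/-!
Each unfolding puts mass 1/2 at 1 and halves and shifts the previous one, so by induction
`μ n = ∑_{k<n} 2^{-(k+1)} δ_{k+1}`. These are the partial sums of the countable sum of measures
`∑_k 2^{-(k+1)} δ_{k+1}`, and on a fixed set the partial sums increase to the full sum.
-/

open MeasureTheory

theorem iSup_sum_range_apply {α : Type*} [MeasurableSpace α] (ν : ℕ → Measure α) (s : Set α) :
    ⨆ n, (∑ k ∈ Finset.range n, ν k) s = Measure.sum ν s := by
  simp only [Measure.finsetSum_apply, Measure.sum_apply_of_countable, ENNReal.tsum_eq_iSup_nat]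

theorem sum_smul_dirac_succ_apply (c : ℕ → ENNReal) (U : Set ℕ) :
    Measure.sum (fun k => c (k + 1) • Measure.dirac (k + 1)) U =
      ∑' k : U, if 1 ≤ (k : ℕ) then c k else 0 := by
  rw [tsum_subtype U fun k => if 1 ≤ k then c k else 0, tsum_eq_zero_add' ENNReal.summable,
    Measure.sum_apply_of_countable]
  have h0 : U.indicator (fun k => if 1 ≤ k then c k else 0) 0 = 0 := by simp
  rw [h0, zero_add]
  refine tsum_congr fun k => ?_
  by_cases hk : k + 1 ∈ U <;> simp [hk]

theorem unfolding_eq_sum_dirac (μ : ℕ → Measure ℕ) (h0 : μ 0 = 0)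
    (hrec : ∀ n : ℕ, μ (n + 1) =
      (1 / 2 : ENNReal) • Measure.dirac 1 +
      (1 / 2 : ENNReal) • Measure.map (fun k => k + 1) (μ n)) (n : ℕ) :
    μ n = ∑ k ∈ Finset.range n, (1 / 2 : ENNReal) ^ (k + 1) • Measure.dirac (k + 1) := by
  induction n with
  | zero => simp [h0]
  | succ n ih =>
    rw [hrec, ih, Measure.map_finset_sum (measurable_add_const 1).aemeasurable,
      Finset.sum_range_succ', Finset.smul_sum, add_comm]
    simp [Measure.map_smul, Measure.map_dirac' (measurable_add_const 1), smul_smul, pow_succ']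

/-- Let `μ n` be the finite unfoldings of the recursive geometric(1/2) sampler:
`μ 0 = 0` and `μ (n+1) = (1/2) • δ_1 + (1/2) • Measure.map (k ↦ k+1) (μ n)`.
Then for every set `U ⊆ ℕ`, `⨆ n, μ n U = ∑_{k ∈ U, 1 ≤ k} (1/2)^k`: the least upper
bound of the unfoldings is the geometric(1/2) distribution supported on `{1, 2, 3, …}`. -/
theorem geometric_unfoldings_sup
    (μ : ℕ → Measure ℕ)
    (h0 : μ 0 = 0)
    (hrec : ∀ n : ℕ, μ (n + 1) =
      (1 / 2 : ENNReal) • Measure.dirac 1 +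
      (1 / 2 : ENNReal) • Measure.map (fun k => k + 1) (μ n)) :
    ∀ U : Set ℕ, (⨆ n, μ n U) =
      ∑' k : U, if 1 ≤ (k : ℕ) then (1 / 2 : ENNReal) ^ (k : ℕ) else 0 := by
  intro U
  simp only [unfolding_eq_sum_dirac μ h0 hrec, iSup_sum_range_apply]
  exact sum_smul_dirac_succ_apply (fun k => (1 / 2 : ENNReal) ^ k) U
end

section
/- Let μ be a probability measure on a measurable space X, ν a σ-finite measure on Y, and p : X → Y → ℝ≥0∞ with the uncurried map measurable and uniformly bounded (there is M : ℝ≥0 with p x y ≤ M for all x, y). Let ρ = ν.withDensity (fun y => ∫⁻ x, p x y ∂μ) (the marginal of the joint distribution on Y). Then for all measurable B ⊆ X and C ⊆ Y: ∫⁻_{y ∈ C} (∫⁻_{x ∈ B} p x y ∂μ) ∂ν = ∫⁻_{y ∈ C} ((∫⁻_{x ∈ B} p x y ∂μ) / (∫⁻_{x} p x y ∂μ)) ∂ρ. That is, the Bayes-rule kernel κ(y, B) = (∫_B p(y|x) dμ)/(∫ p(y|x) dμ) is a version of the conditional distribution of X given Y. -/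
open MeasureTheory ENNReal

/-! Against `ν.withDensity f`, dividing by `f` undoes the density, as long as `f` is finite and
the numerator vanishes where `f` does. Here `f y = ∫⁻ x, p x y ∂μ` is finite because `p` is
bounded and `μ` is finite, and the numerator `∫⁻ x in B, p x y ∂μ` is at most `f y`. -/

theorem setLIntegral_div_withDensity {Y : Type*} [MeasurableSpace Y] (ν : Measure Y)
    {f g : Y → ℝ≥0∞} (hf : Measurable f) (hg : Measurable g) (hgf : ∀ y, g y ≤ f y)
    (hf_top : ∀ y, f y ≠ ∞) {C : Set Y} (hC : MeasurableSet C) :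
    ∫⁻ y in C, g y / f y ∂(ν.withDensity f) = ∫⁻ y in C, g y ∂ν := by
  rw [setLIntegral_withDensity_eq_setLIntegral_mul ν (g := fun y => g y / f y) hf (hg.div hf) hC]
  exact setLIntegral_congr_fun hC fun y _ => ENNReal.mul_div_cancel'
    (fun h0 => le_antisymm (h0 ▸ hgf y) bot_le) fun h => absurd h (hf_top y)

theorem bayes_kernel_is_conditional_general
    {X Y : Type*} [MeasurableSpace X] [MeasurableSpace Y]
    (μ : Measure X) [IsProbabilityMeasure μ]
    (ν : Measure Y)
    (p : X → Y → ℝ≥0∞)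
    (hp : Measurable fun q : X × Y => p q.1 q.2)
    (M : NNReal) (hbd : ∀ x y, p x y ≤ M) :
    ∀ B : Set X, MeasurableSet B → ∀ C : Set Y, MeasurableSet C →
      ∫⁻ y in C, (∫⁻ x in B, p x y ∂μ) ∂ν =
        ∫⁻ y in C, ((∫⁻ x in B, p x y ∂μ) / (∫⁻ x, p x y ∂μ))
          ∂(ν.withDensity (fun y => ∫⁻ x, p x y ∂μ)) := by
  intro B _ C hC
  have hmarg_fin : ∀ y, ∫⁻ x, p x y ∂μ ≠ ∞ := fun y =>
    (IsFiniteMeasure.lintegral_lt_top_of_bounded_to_ennreal μ ⟨M, fun x => hbd x y⟩).ne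
  exact (setLIntegral_div_withDensity ν hp.lintegral_prod_left'
    (hp.lintegral_prod_left' (μ := μ.restrict B)) (fun y => setLIntegral_le_lintegral B _)
    hmarg_fin hC).symm

/-- Effective Bayes' rule: let `μ` be a probability measure on `X` (the prior), `ν` a
σ-finite measure on `Y`, and `p : X → Y → ℝ≥0∞` a jointly measurable, uniformly bounded
conditional density of the observation given the model.  Let
`ρ = ν.withDensity (fun y => ∫⁻ x, p x y ∂μ)` be the marginal on `Y`.  Then the
Bayes-rule kernel `κ (y, B) = (∫⁻_{x ∈ B} p x y ∂μ) / (∫⁻ x, p x y ∂μ)` is a version of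
the conditional distribution of `X` given `Y`: integrating it over `C` against `ρ`
recovers the joint measure of `B ×ˢ C`. -/
theorem bayes_kernel_is_conditional
    {X Y : Type*} [MeasurableSpace X] [MeasurableSpace Y]
    (μ : Measure X) [IsProbabilityMeasure μ]
    (ν : Measure Y) [SigmaFinite ν]
    (p : X → Y → ℝ≥0∞)
    (hp : Measurable fun q : X × Y => p q.1 q.2)
    (M : NNReal) (hbd : ∀ x y, p x y ≤ M) :
    ∀ B : Set X, MeasurableSet B → ∀ C : Set Y, MeasurableSet C →
      ∫⁻ y in C, (∫⁻ x in B, p x y ∂μ) ∂ν =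
        ∫⁻ y in C, ((∫⁻ x in B, p x y ∂μ) / (∫⁻ x, p x y ∂μ))
          ∂(ν.withDensity (fun y => ∫⁻ x, p x y ∂μ)) :=
  bayes_kernel_is_conditional_general μ ν p hp M hbd
end
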